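/- arXiv:math/9507225 — 9 statements merged into one kernel-verified Lean document; each statement's English description precedes it below -/
import Mathlib

section
/- Let λ ∈ ℂ, z ∈ ℂ and p ≥ 1 with f_λ^[p](z) = z. If p is even then f_{−λ}^[p](z) = z; if p is odd then f_{−λ}^[2p](z) = z. -/
open Complex Filter

/-- The tangent family: `f_λ(z) = λ · tan z`, with Mathlib's total complex tangent. -/
noncomputable def ftan (lam : ℂ) : ℂ → ℂ := fun z => lam * Complex.tan z

lemma ftan_neg_iter (lam z : ℂ) (k : ℕ) :
    (ftan (-lam))^[k] z = (-1 : ℂ) ^ k * (ftan lam)^[k] z := by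
  induction k with
  | zero => simp
  | succ k ih =>
    rw [Function.iterate_succ_apply', Function.iterate_succ_apply', ih]
    rcases Nat.even_or_odd k with hk | hk
    · rw [hk.neg_one_pow, pow_succ, hk.neg_one_pow, one_mul]
      simp only [ftan]
      ring
    · rw [hk.neg_one_pow, pow_succ, hk.neg_one_pow, ]
      simp only [ftan]
      rw [neg_one_mul, Complex.tan_neg]
      ring

/-- If `f_λ^[p](z) = z` with `p ≥ 1`, then `f_{−λ}^[p](z) = z` when `p` is even,
and `f_{−λ}^[2p](z) = z` when `p` is odd. -/
theorem periodic_neg_lam (lam z : ℂ) (p : ℕ) (hp : 1 ≤ p)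
    (h : (ftan lam)^[p] z = z) :
    (Even p → (ftan (-lam))^[p] z = z) ∧
    (Odd p → (ftan (-lam))^[2 * p] z = z) := by
  constructor
  · intro hev
    rw [ftan_neg_iter, hev.neg_one_pow, one_mul, h]
  · intro _
    rw [ftan_neg_iter, Even.neg_one_pow ⟨p, two_mul p⟩, one_mul,
      two_mul, Function.iterate_add_apply, h, h]
end

section
/- Let λ ∈ ℂ with 0 < |λ| < 1. Then 0 is an attracting fixed point of f_λ, i.e. f_λ(0) = 0 and deriv f_λ(0) = λ with |λ| < 1; moreover it is the only attracting fixed point: if z ∈ ℂ satisfies cos z ≠ 0, λ·tan z = z and |deriv f_λ(z)| < 1, then z = 0. -/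
/-!
At a fixed point `z ≠ 0` of `λ tan`, `λ = z cot z` and the multiplier `λ / cos² z` equals
`z / (sin z cos z)`. So `|λ| < 1` says `|z cos z| < |sin z|`, and `z` attracting says
`|z| < |sin z cos z|`. With `u + iv = 2z` one has `|sin z|² = (cosh v - cos u) / 2` and
`|cos z|² = (cosh v + cos u) / 2`, and the two inequalities become real ones in `u, v`. Together
they confine `(u, v)` to a bounded region, where the Taylor polynomials of degree six of `cos` and
`cosh` rule them out.
-/

open Complex Filter

open scoped Nat

lemma le_of_hasDerivAt_le {f g f' g' : ℝ → ℝ} (hf : ∀ t, HasDerivAt f (f' t) t)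
    (hg : ∀ t, HasDerivAt g (g' t) t) (h0 : g 0 ≤ f 0) (h' : ∀ t, 0 ≤ t → g' t ≤ f' t)
    {t : ℝ} (ht : 0 ≤ t) : g t ≤ f t := by
  have hmono : MonotoneOn (f - g) (Set.Ici 0) := by
    refine monotoneOn_of_hasDerivWithinAt_nonneg (f' := f' - g') (convex_Ici 0)
      (fun x _ => ((hf x).sub (hg x)).continuousAt.continuousWithinAt)
      (fun x _ => ((hf x).sub (hg x)).hasDerivWithinAt) fun x hx => ?_
    rw [interior_Ici] at hx
    exact sub_nonneg.2 (h' x (le_of_lt hx))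
  have := hmono Set.self_mem_Ici ht ht
  simp only [Pi.sub_apply] at this
  linarith

namespace Real

lemma cos_le_quartic_of_nonneg {t : ℝ} (ht : 0 ≤ t) : cos t ≤ 1 - t ^ 2 / 2 + t ^ 4 / 24 := by
  refine le_of_hasDerivAt_le (f := fun t => 1 - t ^ 2 / 2 + t ^ 4 / 24)
    (f' := fun t => -(t - t ^ 3 / 6)) (fun t => ?_) hasDerivAt_cos (by simp)
    (fun t ht => neg_le_neg (sin_ge_sub_cube ht)) ht
  exact ((((hasDerivAt_pow 2 t).div_const 2).const_sub 1).add
    ((hasDerivAt_pow 4 t).div_const 24)).congr_deriv (by norm_num; ring)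

lemma sin_le_quintic_of_nonneg {t : ℝ} (ht : 0 ≤ t) : sin t ≤ t - t ^ 3 / 6 + t ^ 5 / 120 := by
  refine le_of_hasDerivAt_le (f := fun t => t - t ^ 3 / 6 + t ^ 5 / 120)
    (f' := fun t => 1 - t ^ 2 / 2 + t ^ 4 / 24) (fun t => ?_) hasDerivAt_sin (by simp)
    (fun t ht => cos_le_quartic_of_nonneg ht) ht
  exact (((hasDerivAt_id t).sub ((hasDerivAt_pow 3 t).div_const 6)).add
    ((hasDerivAt_pow 5 t).div_const 120)).congr_deriv (by norm_num; ring)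

lemma sextic_le_cos_of_nonneg {t : ℝ} (ht : 0 ≤ t) :
    1 - t ^ 2 / 2 + t ^ 4 / 24 - t ^ 6 / 720 ≤ cos t := by
  refine le_of_hasDerivAt_le (g := fun t => 1 - t ^ 2 / 2 + t ^ 4 / 24 - t ^ 6 / 720)
    (g' := fun t => -(t - t ^ 3 / 6 + t ^ 5 / 120)) hasDerivAt_cos (fun t => ?_) (by simp)
    (fun t ht => neg_le_neg (sin_le_quintic_of_nonneg ht)) ht
  exact (((((hasDerivAt_pow 2 t).div_const 2).const_sub 1).add
    ((hasDerivAt_pow 4 t).div_const 24)).sub ((hasDerivAt_pow 6 t).div_const 720)).congr_deriv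
    (by norm_num; ring)

lemma sextic_le_cos (t : ℝ) : 1 - t ^ 2 / 2 + t ^ 4 / 24 - t ^ 6 / 720 ≤ cos t := by
  rcases le_total 0 t with ht | ht
  · exact sextic_le_cos_of_nonneg ht
  · simpa [Even.neg_pow (by decide : Even 2), Even.neg_pow (by decide : Even 4),
      Even.neg_pow (by decide : Even 6)] using sextic_le_cos_of_nonneg (neg_nonneg.2 ht)

lemma sum_le_cosh (t : ℝ) (k : ℕ) : ∑ i ∈ Finset.range k, t ^ (2 * i) / (2 * i)! ≤ cosh t :=
  sum_le_hasSum _ (fun i _ => div_nonneg ((even_two_mul i).pow_nonneg t) (by positivity))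
    (hasSum_cosh t)

lemma cosh_le_sum_add_mul_cosh (t : ℝ) (k : ℕ) :
    cosh t ≤ ∑ i ∈ Finset.range k, t ^ (2 * i) / (2 * i)! + t ^ (2 * k) / (2 * k)! * cosh t := by
  have hsum := (hasSum_cosh t).summable
  have hsplit := hsum.sum_add_tsum_nat_add k
  rw [(hasSum_cosh t).tsum_eq] at hsplit
  conv_lhs => rw [← hsplit]
  gcongr
  conv_rhs => rw [← (hasSum_cosh t).tsum_eq, ← tsum_mul_left]
  refine ((summable_nat_add_iff k).2 hsum).tsum_le_tsum (fun n => ?_) (hsum.mul_left _)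
  have hfact : ((2 * k)! * (2 * n)! : ℝ) ≤ (2 * k + 2 * n)! := by
    exact_mod_cast Nat.le_of_dvd (Nat.factorial_pos _)
      (Nat.factorial_mul_factorial_dvd_factorial_add _ _)
  rw [show 2 * (n + k) = 2 * k + 2 * n by ring, pow_add, div_mul_div_comm]
  gcongr
  exact mul_nonneg ((even_two_mul k).pow_nonneg t) ((even_two_mul n).pow_nonneg t)

lemma sextic_le_cosh (t : ℝ) : 1 + t ^ 2 / 2 + t ^ 4 / 24 + t ^ 6 / 720 ≤ cosh t := by
  simpa [Finset.sum_range_succ, Nat.factorial, ← pow_mul] using sum_le_cosh t 4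

lemma cosh_le_sextic_add (t : ℝ) :
    cosh t ≤ 1 + t ^ 2 / 2 + t ^ 4 / 24 + t ^ 6 / 720 + t ^ 8 / 40320 * cosh t := by
  simpa [Finset.sum_range_succ, Nat.factorial, ← pow_mul] using cosh_le_sum_add_mul_cosh t 4


/- With `u + iv = 2z`, hypothesis `hA` reads `|z| < |sin z cos z|` and `hB` reads
`|z cos z| < |sin z|`. -/

variable {u v : ℝ}

lemma sq_lt_of_mul_cosh_add_cos_lt
    (hB : (u ^ 2 + v ^ 2) * (cosh v + cos u) < 4 * (cosh v - cos u)) : v ^ 2 < 13 / 2 := by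
  have hC := neg_one_le_cos u
  have hH := one_le_cosh v
  have h1 : v ^ 2 * (cosh v - 1) < 4 * (cosh v - 1) + 8 := by
    nlinarith [mul_nonneg (sq_nonneg u) (by linarith : 0 ≤ cosh v + cos u),
      mul_nonneg (sq_nonneg v) (by linarith : 0 ≤ cos u + 1), cos_le_one u]
  by_contra! hv
  have hH' : 13 / 4 ≤ cosh v - 1 := by
    nlinarith [sextic_le_cosh v, Even.pow_nonneg (by decide : Even 4) v,
      Even.pow_nonneg (by decide : Even 6) v]
  nlinarith [mul_le_mul (by linarith : (5 / 2 : ℝ) ≤ v ^ 2 - 4) hH' (by norm_num) (by linarith)]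

lemma cosh_le_of_sq_le (hv : v ^ 2 ≤ 13 / 2) : cosh v ≤ 67 / 10 := by
  have hv4 : v ^ 4 ≤ (13 / 2) ^ 2 := by rw [show v ^ 4 = (v ^ 2) ^ 2 by ring]; gcongr
  have hv6 : v ^ 6 ≤ (13 / 2) ^ 3 := by rw [show v ^ 6 = (v ^ 2) ^ 3 by ring]; gcongr
  have hv8 : v ^ 8 * cosh v ≤ (13 / 2) ^ 4 * cosh v := by
    rw [show v ^ 8 = (v ^ 2) ^ 4 by ring]
    gcongr
  nlinarith [cosh_le_sextic_add v]

lemma sq_add_sq_lt_twelve (hA : u ^ 2 + v ^ 2 < cosh v ^ 2 - cos u ^ 2)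
    (hB : (u ^ 2 + v ^ 2) * (cosh v + cos u) < 4 * (cosh v - cos u)) : u ^ 2 + v ^ 2 < 12 := by
  by_contra! hR
  have hC := neg_one_le_cos u
  have h1 : (u ^ 2 + v ^ 2) * (cosh v - 1) < 4 * (cosh v - 1) + 8 := by
    nlinarith [mul_nonneg (by linarith : 0 ≤ u ^ 2 + v ^ 2) (by linarith : 0 ≤ cos u + 1)]
  have hH : cosh v < 2 := by nlinarith [one_le_cosh v]
  nlinarith [sq_nonneg (cos u), cosh_pos v]

lemma sq_add_sq_lt_two_mul (hA : u ^ 2 + v ^ 2 < cosh v ^ 2 - cos u ^ 2)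
    (hB : (u ^ 2 + v ^ 2) * (cosh v + cos u) < 4 * (cosh v - cos u)) :
    u ^ 2 + v ^ 2 < 2 * (cosh v - cos u) := by
  have hR : 0 ≤ u ^ 2 + v ^ 2 := by positivity
  have hD : 0 ≤ cosh v - cos u := by linarith [one_le_cosh v, cos_le_one u]
  have hS : 0 < cosh v + cos u := by
    by_contra! hS
    nlinarith [mul_nonneg hD (neg_nonneg.2 hS)]
  by_contra! hT
  have hS2 : cosh v + cos u < 2 := by nlinarith
  nlinarith [mul_lt_mul_of_pos_left hS2 (by nlinarith : 0 < cosh v - cos u)]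

lemma four_mul_cosh_sub_cos_le (hA : u ^ 2 + v ^ 2 < cosh v ^ 2 - cos u ^ 2) :
    4 * (cosh v - cos u) ≤ (u ^ 2 + v ^ 2) * (cosh v + cos u) := by
  by_contra! hB
  have hv := sq_lt_of_mul_cosh_add_cos_lt hB
  have hH := cosh_le_of_sq_le hv.le
  have hR := sq_add_sq_lt_twelve hA hB
  have hT := sq_add_sq_lt_two_mul hA hB
  have hu6 : 0 ≤ u ^ 6 := Even.pow_nonneg (by decide) u
  have hv6 : 0 ≤ v ^ 6 := Even.pow_nonneg (by decide) v
  have hD : cosh v - cos u ≤ (u ^ 2 + v ^ 2) / 2 + (v ^ 4 - u ^ 4) / 24 + (v ^ 6 + u ^ 6) / 720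
      + v ^ 8 / 40320 * cosh v := by
    linarith [cosh_le_sextic_add v, sextic_le_cos u]
  have hS : (u ^ 2 + v ^ 2) *
      (2 + (v ^ 2 - u ^ 2) / 2 + (v ^ 4 + u ^ 4) / 24 + (v ^ 6 - u ^ 6) / 720) ≤
      (u ^ 2 + v ^ 2) * (cosh v + cos u) := by
    refine mul_le_mul_of_nonneg_left ?_ (by positivity)
    linarith [sextic_le_cosh v, sextic_le_cos u]
  have hv8 : v ^ 8 * cosh v ≤ 13 / 2 * (67 / 10) * v ^ 6 := by
    have : v ^ 2 * cosh v ≤ 13 / 2 * (67 / 10) := by nlinarith [one_le_cosh v, sq_nonneg v]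
    nlinarith [mul_le_mul_of_nonneg_left this hv6]
  have hcube : u ^ 6 + v ^ 6 ≤ (u ^ 2 + v ^ 2) * (u ^ 4 + v ^ 4) := by
    nlinarith [mul_nonneg (sq_nonneg u) (pow_nonneg (sq_nonneg v) 2),
      mul_nonneg (sq_nonneg v) (pow_nonneg (sq_nonneg u) 2)]
  have hRu : (u ^ 2 + v ^ 2) * u ^ 6 ≤ 12 * u ^ 6 := mul_le_mul_of_nonneg_right hR.le hu6
  -- Eliminating `u ^ 4 - v ^ 4` between `hT, hD` and `hB, hS, hD` leaves
  -- `(u ^ 2 + v ^ 2) * (u ^ 4 + v ^ 4) / 24` below sixth-order terms with smaller coefficients.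
  linarith [mul_nonneg (by positivity : (0 : ℝ) ≤ u ^ 2 + v ^ 2) hv6]

end Real

namespace Complex

lemma sq_norm_sin (z : ℂ) :
    ‖sin z‖ ^ 2 = (Real.cosh (2 * z.im) - Real.cos (2 * z.re)) / 2 := by
  rw [Complex.sq_norm, sin_eq, ← ofReal_sin, ← ofReal_cos, ← ofReal_sinh, ← ofReal_cosh,
    ← ofReal_mul, ← ofReal_mul, normSq_add_mul_I, Real.cosh_two_mul, Real.cos_two_mul]
  linear_combination (Real.sin z.re ^ 2 - 1 / 2) * Real.cosh_sq z.im +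
    (Real.sinh z.im ^ 2 + 1) * Real.sin_sq_add_cos_sq z.re

lemma sq_norm_cos (z : ℂ) :
    ‖cos z‖ ^ 2 = (Real.cosh (2 * z.im) + Real.cos (2 * z.re)) / 2 := by
  rw [Complex.sq_norm, cos_eq, ← ofReal_sin, ← ofReal_cos, ← ofReal_sinh, ← ofReal_cosh,
    ← ofReal_mul, ← ofReal_mul, sub_eq_add_neg, ← neg_mul, ← ofReal_neg, normSq_add_mul_I,
    Real.cosh_two_mul, Real.cos_two_mul]
  linear_combination (Real.cos z.re ^ 2 - 1 / 2) * Real.cosh_sq z.im +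
    Real.sinh z.im ^ 2 * Real.sin_sq_add_cos_sq z.re

lemma norm_sin_le_or_norm_sin_mul_cos_le (z : ℂ) :
    ‖sin z‖ ≤ ‖z * cos z‖ ∨ ‖sin z * cos z‖ ≤ ‖z‖ := by
  refine (le_or_gt ‖sin z * cos z‖ ‖z‖).elim Or.inr fun hA => Or.inl ?_
  have hA' := pow_lt_pow_left₀ hA (norm_nonneg _) two_ne_zero
  rw [norm_mul, mul_pow, sq_norm_sin, sq_norm_cos, Complex.sq_norm z, normSq_apply] at hA'
  have key := Real.four_mul_cosh_sub_cos_le (u := 2 * z.re) (v := 2 * z.im) (by nlinarith)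
  rw [← pow_le_pow_iff_left₀ (norm_nonneg _) (norm_nonneg _) two_ne_zero, norm_mul, mul_pow,
    sq_norm_sin, sq_norm_cos, Complex.sq_norm z, normSq_apply]
  nlinarith

end Complex

theorem origin_unique_attracting_fixed_point_general (lam : ℂ)
    (h1 : ‖lam‖ < 1) :
    ftan lam 0 = 0 ∧ deriv (ftan lam) 0 = lam ∧
    ∀ z : ℂ, Complex.cos z ≠ 0 → lam * Complex.tan z = z →
      ‖deriv (ftan lam) z‖ < 1 → z = 0 := by
  have hderiv : ∀ z, cos z ≠ 0 → deriv (ftan lam) z = lam / cos z ^ 2 := fun z hz => by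
    rw [div_eq_mul_one_div]
    exact ((hasDerivAt_tan hz).const_mul lam).deriv
  refine ⟨by simp [ftan], by simp [hderiv 0 (by simp)], fun z hcos hfix hmul => ?_⟩
  have hfix' : lam * sin z = z * cos z := by
    rw [tan_eq_sin_div_cos] at hfix
    field_simp at hfix
    linear_combination hfix
  rw [hderiv z hcos, norm_div, norm_pow, div_lt_one (by positivity)] at hmul
  suffices sin z = 0 by simpa [this, hcos] using hfix'.symm
  by_contra hsin
  have hsin' : 0 < ‖sin z‖ := norm_pos_iff.2 hsin
  have hcos' : 0 < ‖cos z‖ := norm_pos_iff.2 hcos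
  have hnorm : ‖z * cos z‖ = ‖lam‖ * ‖sin z‖ := by rw [← hfix', norm_mul]
  rcases norm_sin_le_or_norm_sin_mul_cos_le z with h | h
  · rw [hnorm] at h
    nlinarith
  · rw [norm_mul] at h hnorm
    nlinarith [mul_le_mul_of_nonneg_right h hcos'.le]

/-- For `0 < |λ| < 1`, the origin is an attracting fixed point of `f_λ`
(with multiplier `λ`), and it is the only attracting fixed point. -/
theorem origin_unique_attracting_fixed_point (lam : ℂ)
    (h0 : 0 < ‖lam‖) (h1 : ‖lam‖ < 1) :
    ftan lam 0 = 0 ∧ deriv (ftan lam) 0 = lam ∧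
    ∀ z : ℂ, Complex.cos z ≠ 0 → lam * Complex.tan z = z →
      ‖deriv (ftan lam) z‖ < 1 → z = 0 :=
  origin_unique_attracting_fixed_point_general lam h1
end

section
/- Let λ be a real number with λ > 1. Then there exists a real t > 0 with λ·tanh t = t, and the purely imaginary points i·t and −i·t are two distinct attracting fixed points of f_λ: f_λ(i·t) = i·t, f_λ(−i·t) = −i·t, and |deriv f_λ(i·t)| < 1 (equally |deriv f_λ(−i·t)| < 1). -/
/-!
The real equation `λ tanh t = t` has a positive root by the intermediate value theorem, since
`λ tanh t - t` is positive at `t = log λ` and negative at `t = λ`. As `tan (i t) = i tanh t`, the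
points `± i t` are fixed by the odd map `f_λ`, with multiplier `λ / cos² (i t) = λ / cosh² t`.
Substituting `λ = t cosh t / sinh t` turns this into `t / (sinh t cosh t)`, which is `< 1`
because `t < sinh t` and `1 ≤ cosh t`.
-/

open Complex Filter

namespace Real

theorem continuous_tanh : Continuous tanh := by
  rw [show tanh = fun x => sinh x / cosh x from funext tanh_eq_sinh_div_cosh]
  exact continuous_sinh.div continuous_cosh fun x => (cosh_pos x).ne'

theorem lt_mul_tanh_log {lam : ℝ} (h : 1 < lam) : log lam < lam * tanh (log lam) := by
  have hlam : 0 < lam := one_pos.trans h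
  have hlog : 0 < log lam := log_pos h
  have hcosh : cosh (log lam) < lam := by
    rw [cosh_log hlam]
    have : lam⁻¹ < lam := (inv_lt_one_of_one_lt₀ h).trans h
    linarith
  have hsinh : 0 < sinh (log lam) := sinh_pos_iff.2 hlog
  calc log lam < sinh (log lam) := self_lt_sinh_iff.2 hlog
    _ = cosh (log lam) * sinh (log lam) / cosh (log lam) := by
      rw [mul_div_cancel_left₀ _ (cosh_pos _).ne']
    _ < lam * sinh (log lam) / cosh (log lam) := by gcongr
    _ = lam * tanh (log lam) := by rw [tanh_eq_sinh_div_cosh, mul_div_assoc]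

theorem exists_pos_mul_tanh_eq_self {lam : ℝ} (h : 1 < lam) :
    ∃ t : ℝ, 0 < t ∧ lam * tanh t = t := by
  have hlam : 0 < lam := one_pos.trans h
  have hcont : Continuous fun x => lam * tanh x - x :=
    (continuous_const.mul continuous_tanh).sub continuous_id
  have hle : log lam ≤ lam := (log_le_sub_one_of_pos hlam).trans (by linarith)
  have hmem : (0 : ℝ) ∈ Set.Icc (lam * tanh lam - lam) (lam * tanh (log lam) - log lam) := by
    constructor
    · nlinarith [tanh_lt_one lam]
    · linarith [lt_mul_tanh_log h]
  obtain ⟨t, ht, hroot⟩ := intermediate_value_Icc' hle hcont.continuousOn hmem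
  exact ⟨t, (log_pos h).trans_le ht.1, by linarith⟩

theorem lt_cosh_sq_of_mul_tanh_eq_self {lam t : ℝ} (ht : 0 < t) (hfix : lam * tanh t = t) :
    lam < cosh t ^ 2 := by
  have hsinh : 0 < sinh t := sinh_pos_iff.2 ht
  have hcosh : 0 < cosh t := cosh_pos t
  have hlam : lam * sinh t = t * cosh t := by
    rw [tanh_eq_sinh_div_cosh] at hfix
    field_simp at hfix
    linarith
  refine lt_of_mul_lt_mul_right ?_ hsinh.le
  calc lam * sinh t = t * cosh t := hlam
    _ < sinh t * cosh t := mul_lt_mul_of_pos_right (self_lt_sinh_iff.2 ht) hcosh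
    _ ≤ sinh t * cosh t * cosh t := le_mul_of_one_le_right (by positivity) (one_le_cosh t)
    _ = cosh t ^ 2 * sinh t := by ring

end Real

theorem Complex.tan_I_mul_ofReal (t : ℝ) : tan (I * t) = I * Real.tanh t := by
  rw [mul_comm, tan_mul_I, ofReal_tanh, mul_comm]

theorem Complex.cos_I_mul_ofReal (t : ℝ) : cos (I * t) = Real.cosh t := by
  rw [mul_comm, cos_mul_I, ofReal_cosh]

theorem ftan_neg (lam z : ℂ) : ftan lam (-z) = -ftan lam z := by
  simp only [ftan, tan_neg, mul_neg]

theorem hasDerivAt_ftan (lam : ℂ) {z : ℂ} (hz : cos z ≠ 0) :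
    HasDerivAt (ftan lam) (lam / cos z ^ 2) z := by
  have := (hasDerivAt_tan hz).const_mul lam
  rwa [mul_one_div] at this

theorem ftan_I_mul_ofReal {lam t : ℝ} (hfix : lam * Real.tanh t = t) :
    ftan lam (I * t) = I * t := by
  rw [ftan, tan_I_mul_ofReal, mul_left_comm, ← ofReal_mul, hfix]

theorem deriv_ftan_I_mul_ofReal (lam : ℂ) (t : ℝ) :
    deriv (ftan lam) (I * t) = lam / (Real.cosh t : ℂ) ^ 2 := by
  have hcos : cos (I * t) ≠ 0 := by
    rw [cos_I_mul_ofReal]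
    exact_mod_cast (Real.cosh_pos t).ne'
  rw [(hasDerivAt_ftan lam hcos).deriv, cos_I_mul_ofReal]

/-- For real `λ > 1`, there is `t > 0` with `λ·tanh t = t`, and `±it` are two
distinct attracting fixed points of `f_λ`. -/
theorem two_attracting_fixed_points_real_lam (lam : ℝ) (h : 1 < lam) :
    ∃ t : ℝ, 0 < t ∧ lam * Real.tanh t = t ∧
      ftan (lam : ℂ) (Complex.I * t) = Complex.I * t ∧
      ftan (lam : ℂ) (-(Complex.I * t)) = -(Complex.I * t) ∧
      (Complex.I * (t : ℂ)) ≠ -(Complex.I * t) ∧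
      ‖deriv (ftan (lam : ℂ)) (Complex.I * t)‖ < 1 ∧
      ‖deriv (ftan (lam : ℂ)) (-(Complex.I * t))‖ < 1 := by
  obtain ⟨t, ht, hfix⟩ := Real.exists_pos_mul_tanh_eq_self h
  have hfixC := ftan_I_mul_ofReal hfix
  have hmult : ‖(lam : ℂ) / (Real.cosh t : ℂ) ^ 2‖ < 1 := by
    rw [← ofReal_pow, ← ofReal_div, norm_real, Real.norm_of_nonneg (by positivity),
      div_lt_one (by positivity)]
    exact Real.lt_cosh_sq_of_mul_tanh_eq_self ht hfix
  refine ⟨t, ht, hfix, hfixC, by rw [ftan_neg, hfixC], ?_, ?_, ?_⟩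
  · rw [Ne, self_eq_neg]
    exact mul_ne_zero I_ne_zero (ofReal_ne_zero.2 ht.ne')
  · rwa [deriv_ftan_I_mul_ofReal]
  · rwa [← mul_neg, ← ofReal_neg, deriv_ftan_I_mul_ofReal, Real.cosh_neg]
end

section
/- Let λ ∈ ℂ, λ ≠ 0, let p ≥ 2, and let v ∈ ℂ be a prepole of f_λ of order p−1 with v ≠ iλ and v ≠ −iλ. Then there exists a sequence (z_k) in ℂ such that: each z_k is a periodic point of f_λ of period p whose orbit is pole-free up to time p (f_λ^[p](z_k) = z_k); z_k → v as k → ∞; and the multipliers satisfy |deriv(f_λ^[p])(z_k)| → ∞ as k → ∞. -/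
open Complex Filter

/-- `z` is a prepole of `f_λ` of order `p` (for `p ≥ 1`): `cos (f_λ^[p−1] z) = 0`
and `cos (f_λ^[j] z) ≠ 0` for all `0 ≤ j < p−1`. -/
def IsPrepole (lam : ℂ) (p : ℕ) (z : ℂ) : Prop :=
  Complex.cos ((ftan lam)^[p - 1] z) = 0 ∧
  ∀ j < p - 1, Complex.cos ((ftan lam)^[j] z) ≠ 0

/-- The orbit of `z` under `f_λ` is pole-free up to time `q`. -/
def PoleFree (lam : ℂ) (q : ℕ) (z : ℂ) : Prop :=
  ∀ j < q, Complex.cos ((ftan lam)^[j] z) ≠ 0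

/-!
Write `p = m + 2`, so that `f^[m] v` is a pole. Because `tan` takes the junk value `0` at poles,
`G z = (f^[m+1] z)⁻¹ = cos (f^[m] z) / (λ sin (f^[m] z))` holds everywhere, so `G` is holomorphic
near `v` with a simple zero there. As `v ≠ ±iλ` is not an asymptotic value, `f` has a local
inverse branch `α` at `v`. For large `k` a Newton-type contraction yields `z_k` within `O(1/k)`
of `v` with `G z_k * (α z_k + kπ) = 1`, that is `f^[m+1] z_k = α z_k + kπ`, and then
`f^[p] z_k = f (α z_k) = z_k` by `π`-periodicity. In the multiplier
`∏_{j<p} λ / cos² (f^[j] z_k)` the factor `j = m` blows up since `cos (f^[m] z_k) → 0`, while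
the others have nonzero limits; the last one is `λ + z_k² / λ → λ + v² / λ ≠ 0`.
-/

open Metric Topology
open scoped NNReal

section Perturbation

variable {𝕜 : Type*} [NontriviallyNormedField 𝕜]

theorem LipschitzOnWith.inv_of_le_nnnorm {E : Type*} [SeminormedAddCommGroup E] {h : E → 𝕜}
    {s : Set E} {K κ : ℝ≥0} (hh : LipschitzOnWith K h s) (hκ : 0 < κ)
    (hκh : ∀ z ∈ s, κ ≤ ‖h z‖₊) : LipschitzOnWith (K / κ ^ 2) (fun z => (h z)⁻¹) s := by
  rw [lipschitzOnWith_iff_norm_sub_le]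
  intro x hx y hy
  have hκx : (κ : ℝ) ≤ ‖h x‖ := hκh x hx
  have hκy : (κ : ℝ) ≤ ‖h y‖ := hκh y hy
  have hκ' : (0 : ℝ) < κ := hκ
  have hx0 : h x ≠ 0 := norm_pos_iff.1 (hκ'.trans_le hκx)
  have hy0 : h y ≠ 0 := norm_pos_iff.1 (hκ'.trans_le hκy)
  calc ‖(h x)⁻¹ - (h y)⁻¹‖ = ‖h y - h x‖ / (‖h x‖ * ‖h y‖) := by
        rw [inv_sub_inv' hx0 hy0, norm_mul, norm_mul, norm_inv, norm_inv]; ring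
    _ ≤ K * ‖x - y‖ / (κ * κ) := by
        gcongr
        rw [norm_sub_rev x y]
        exact hh.norm_sub_le hy hx
    _ = ↑(K / κ ^ 2) * ‖x - y‖ := by push_cast; ring

theorem ApproximatesLinearOn.sub_lipschitzOnWith {E F : Type*} [NormedAddCommGroup E]
    [NormedSpace 𝕜 E] [NormedAddCommGroup F] [NormedSpace 𝕜 F] {f g : E → F} {f' : E →L[𝕜] F}
    {s : Set E} {c K : ℝ≥0} (hf : ApproximatesLinearOn f f' s c) (hg : LipschitzOnWith K g s) :
    ApproximatesLinearOn (f - g) f' s (c + K) := by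
  rw [approximatesLinearOn_iff_lipschitzOnWith] at hf ⊢
  have : f - g - ⇑f' = (f - ⇑f') - g := by abel
  rw [this]
  exact hf.sub hg

variable [CompleteSpace 𝕜]

theorem ApproximatesLinearOn.exists_mem_closedBall_eq_zero {F : 𝕜 → 𝕜} {d c : 𝕜} {r : ℝ}
    (hd : d ≠ 0)
    (hF : ApproximatesLinearOn F (ContinuousLinearMap.toSpanSingleton 𝕜 d) (closedBall c r)
      (‖d‖₊ / 2))
    (hc : ‖F c‖ ≤ ‖d‖ * r / 2) : ∃ z ∈ closedBall c r, F z = 0 := by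
  let dInv : (ContinuousLinearMap.toSpanSingleton 𝕜 d).NonlinearRightInverse :=
    { toFun := fun y => d⁻¹ * y
      nnnorm := ‖d‖₊⁻¹
      bound' := fun y => by simp
      right_inv' := fun y => by simp [field] }
  have hr : 0 ≤ r := by
    have := (norm_nonneg _).trans hc
    have := norm_pos_iff.2 hd
    nlinarith
  refine hF.surjOn_closedBall_of_nonlinearRightInverse dInv hr subset_rfl ?_
  rw [mem_closedBall, dist_comm, dist_zero_right]
  convert hc using 1
  simp only [dInv, NNReal.coe_inv, inv_inv, NNReal.coe_div, coe_nnnorm, NNReal.coe_ofNat]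
  ring

theorem exists_mem_closedBall_mul_eq_one {G H : 𝕜 → 𝕜} {d v : 𝕜} {ρ : ℝ} {K κ : ℝ≥0}
    (hd : d ≠ 0)
    (hG : ApproximatesLinearOn G (ContinuousLinearMap.toSpanSingleton 𝕜 d) (closedBall v ρ)
      (‖d‖₊ / 4))
    (hGv : G v = 0) (hH : LipschitzOnWith K H (closedBall v ρ)) (hκ : 0 < κ)
    (hHκ : ∀ z ∈ closedBall v ρ, κ ≤ ‖H z‖₊) (hK : K / κ ^ 2 ≤ ‖d‖₊ / 4)
    (hρ : 2 ≤ ‖d‖ * κ * ρ) :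
    ∃ z ∈ closedBall v ρ, G z * H z = 1 := by
  have hH0 : ∀ z ∈ closedBall v ρ, H z ≠ 0 := fun z hz =>
    nnnorm_pos.1 (hκ.trans_le (hHκ z hz))
  have hF := (hG.sub_lipschitzOnWith (hH.inv_of_le_nnnorm hκ hHκ)).mono_num
    (c' := ‖d‖₊ / 2) (by grw [hK]; exact le_of_eq (by ring))
  have hκ' : (0 : ℝ) < κ := hκ
  have hv : v ∈ closedBall v ρ := mem_closedBall_self (by
    by_contra! h
    nlinarith [mul_nonneg (norm_nonneg d) hκ'.le])
  have hFv : ‖(G - fun z => (H z)⁻¹) v‖ ≤ ‖d‖ * ρ / 2 :=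
    calc ‖(G - fun z => (H z)⁻¹) v‖ = ‖H v‖⁻¹ := by simp [hGv]
      _ ≤ (κ : ℝ)⁻¹ := inv_anti₀ hκ' (hHκ v hv)
      _ ≤ ‖d‖ * ρ / 2 := by
        rw [inv_le_iff_one_le_mul₀ hκ']
        linarith
  obtain ⟨z, hz, hFz⟩ := hF.exists_mem_closedBall_eq_zero hd hFv
  refine ⟨z, hz, ?_⟩
  rw [sub_eq_zero.1 hFz, inv_mul_cancel₀ (hH0 z hz)]

theorem eventually_exists_mem_closedBall_mul_add_eq_one {G α : 𝕜 → 𝕜} {d v : 𝕜} {c : ℕ → 𝕜}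
    {r : ℝ} {K : ℝ≥0} (hd : d ≠ 0)
    (hG : ApproximatesLinearOn G (ContinuousLinearMap.toSpanSingleton 𝕜 d) (closedBall v r)
      (‖d‖₊ / 4))
    (hGv : G v = 0) (hα : LipschitzOnWith K α (closedBall v r)) (hr : 0 < r)
    (hc : Tendsto (fun k => ‖c k‖) atTop atTop) :
    ∀ᶠ k in atTop, ∃ z ∈ closedBall v (4 / (‖d‖ * ‖c k‖)), G z * (α z + c k) = 1 := by
  have hd' : 0 < ‖d‖ := norm_pos_iff.2 hd
  have hαA : ∀ z ∈ closedBall v r, ‖α z‖ ≤ ‖α v‖ + K * r := fun z hz => by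
    have := hα.norm_sub_le_of_le hz (mem_closedBall_self hr.le) (mem_closedBall_iff_norm.1 hz)
    linarith [norm_le_norm_add_norm_sub' (α z) (α v)]
  filter_upwards [hc.eventually_gt_atTop 0, hc.eventually_ge_atTop (2 * (‖α v‖ + K * r)),
    hc.eventually_ge_atTop (4 / (‖d‖ * r)),
    (hc.atTop_mul_atTop₀ hc).eventually_ge_atTop (16 * K / ‖d‖)] with k hc0 hcA hcr hcK
  have hρr : 4 / (‖d‖ * ‖c k‖) ≤ r := by
    rw [div_le_iff₀ (by positivity)]
    rw [div_le_iff₀ (by positivity)] at hcr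
    linarith
  have hball := closedBall_subset_closedBall (x := v) hρr
  refine exists_mem_closedBall_mul_eq_one (K := K) (κ := ‖c k‖₊ / 2) hd (hG.mono_set hball) hGv
    ?_ (half_pos (by rwa [← NNReal.coe_pos, coe_nnnorm])) (fun z hz => ?_) ?_ ?_
  · simpa using (hα.mono hball).add (LipschitzWith.const (c k)).lipschitzOnWith
  · rw [← NNReal.coe_le_coe]
    push_cast
    have := norm_sub_le (α z + c k) (α z)
    rw [add_sub_cancel_left] at this
    linarith [hαA z (hball hz)]
  · rw [← NNReal.coe_le_coe]
    push_cast
    rw [div_le_iff₀ (by positivity)]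
    rw [div_le_iff₀ hd'] at hcK
    nlinarith
  · push_cast
    field_simp
    norm_num

theorem exists_seq_tendsto_mul_add_eq_one {G α : 𝕜 → 𝕜} {d a v : 𝕜} {c : ℕ → 𝕜}
    (hG : HasStrictDerivAt G d v) (hd : d ≠ 0) (hGv : G v = 0) (hα : HasStrictDerivAt α a v)
    (hc : Tendsto (fun k => ‖c k‖) atTop atTop) :
    ∃ z : ℕ → 𝕜, Tendsto z atTop (𝓝 v) ∧ ∀ᶠ k in atTop, G (z k) * (α (z k) + c k) = 1 := by
  obtain ⟨s, hs, hGs⟩ :=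
    hG.hasStrictFDerivAt.approximates_deriv_on_nhds (c := ‖d‖₊ / 4)
      (Or.inr (div_pos (nnnorm_pos.2 hd) four_pos))
  obtain ⟨K, t, ht, hαt⟩ := hα.hasStrictFDerivAt.exists_lipschitzOnWith
  obtain ⟨r, hr, hrst⟩ := nhds_basis_closedBall.mem_iff.1 (inter_mem hs ht)
  obtain ⟨z, hz⟩ := (eventually_exists_mem_closedBall_mul_add_eq_one hd
    (hGs.mono_set (hrst.trans Set.inter_subset_left)) hGv
    (hαt.mono (hrst.trans Set.inter_subset_right)) hr hc).choice
  refine ⟨z, tendsto_iff_dist_tendsto_zero.2 ?_, hz.mono fun k hk => hk.2⟩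
  exact squeeze_zero' (.of_forall fun k => dist_nonneg) (hz.mono fun k hk => hk.1)
    (tendsto_const_nhds.div_atTop (hc.const_mul_atTop (norm_pos_iff.2 hd)))

end Perturbation

section TangentFamily

open scoped Real

variable {lam : ℂ}

theorem ftan_add_nat_mul_pi (lam z : ℂ) (n : ℕ) : ftan lam (z + n * π) = ftan lam z := by
  show lam * tan _ = lam * tan _
  rw [tan_add_nat_mul_pi]

theorem cos_ne_zero_of_ftan_ne_zero {z : ℂ} (h : ftan lam z ≠ 0) : cos z ≠ 0 := fun hz =>
  h (by simp [ftan, tan_eq_sin_div_cos, hz])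

theorem hasStrictDerivAt_ftan (lam : ℂ) {z : ℂ} (hz : cos z ≠ 0) :
    HasStrictDerivAt (ftan lam) (lam / cos z ^ 2) z :=
  ((hasStrictDerivAt_tan hz).const_mul lam).congr_deriv (by ring)

theorem hasStrictDerivAt_inv_ftan (hlam : lam ≠ 0) {w : ℂ} (hw : cos w = 0) :
    HasStrictDerivAt (fun z => (ftan lam z)⁻¹) (-lam⁻¹) w := by
  have hsin : sin w ^ 2 = 1 := by simpa [hw] using sin_sq_add_cos_sq w
  have hsin0 : sin w ≠ 0 := fun h => by simp [h] at hsin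
  -- also at the poles, where both sides are `0`
  have hcot : (fun z => (ftan lam z)⁻¹) = fun z => cos z / (lam * sin z) := by
    funext z
    simp only [ftan, tan_eq_sin_div_cos, mul_inv, inv_div]
    ring
  rw [hcot]
  refine ((hasStrictDerivAt_cos w).div ((hasStrictDerivAt_sin w).const_mul lam)
    (mul_ne_zero hlam hsin0)).congr_deriv ?_
  rw [hw]
  field_simp
  ring

theorem div_cos_sq_eq_add_ftan_sq (hlam : lam ≠ 0) {w : ℂ} (hw : cos w ≠ 0) :
    lam / cos w ^ 2 = lam + ftan lam w ^ 2 / lam := by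
  simp only [ftan, tan_eq_sin_div_cos]
  field_simp
  linear_combination -sin_sq_add_cos_sq w

theorem exists_ftan_eq (hlam : lam ≠ 0) {v : ℂ} (h1 : v ≠ I * lam) (h2 : v ≠ -(I * lam)) :
    ∃ b, cos b ≠ 0 ∧ ftan lam b = v := by
  have htan : tan (arctan (v / lam)) = v / lam := by
    refine tan_arctan ?_ ?_ <;> rw [ne_eq, div_eq_iff hlam]
    exacts [h1, by rwa [neg_mul]]
  refine ⟨arctan (v / lam), fun hcos => ?_, by rw [ftan, htan, mul_div_cancel₀ _ hlam]⟩
  -- a pole would carry the junk value `tan = 0`, but `arctan 0 = 0` is no pole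
  rw [tan_eq_sin_div_cos, hcos, div_zero] at htan
  simp [← htan, arctan] at hcos

theorem exists_local_inverse_ftan (hlam : lam ≠ 0) {v : ℂ} (h1 : v ≠ I * lam)
    (h2 : v ≠ -(I * lam)) :
    ∃ α : ℂ → ℂ, ∃ a : ℂ, HasStrictDerivAt α a v ∧
      ∀ᶠ z in 𝓝 v, cos (α z) ≠ 0 ∧ ftan lam (α z) = z := by
  obtain ⟨b, hb, rfl⟩ := exists_ftan_eq hlam h1 h2
  have hf := hasStrictDerivAt_ftan lam hb
  have hf' : lam / cos b ^ 2 ≠ 0 := div_ne_zero hlam (pow_ne_zero 2 hb)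
  have hinv := hf.to_localInverse hf'
  have hb' : hf.localInverse _ _ _ hf' (ftan lam b) = b :=
    HasStrictFDerivAt.localInverse_apply_image ..
  refine ⟨_, _, hinv, ?_⟩
  exact ((continuous_cos.continuousAt.comp hinv.hasDerivAt.continuousAt).eventually_ne
    (by rwa [Function.comp_apply, hb'])).and (hf.eventually_right_inverse hf')

theorem poleFree_succ {n : ℕ} {z : ℂ} :
    PoleFree lam (n + 1) z ↔ PoleFree lam n z ∧ cos ((ftan lam)^[n] z) ≠ 0 := by
  simp only [PoleFree, Nat.lt_succ_iff_lt_or_eq, or_imp, forall_and, forall_eq]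

namespace PoleFree

variable {n : ℕ} {z : ℂ}

theorem mono {m : ℕ} (h : PoleFree lam n z) (hmn : m ≤ n) : PoleFree lam m z :=
  fun j hj => h j (hj.trans_le hmn)

theorem hasStrictDerivAt_iterate (h : PoleFree lam n z) :
    HasStrictDerivAt (ftan lam)^[n]
      (∏ j ∈ Finset.range n, lam / cos ((ftan lam)^[j] z) ^ 2) z := by
  induction n with
  | zero => simpa using hasStrictDerivAt_id z
  | succ n ih =>
    obtain ⟨hn, hcos⟩ := poleFree_succ.1 h
    rw [Function.iterate_succ', Finset.prod_range_succ, mul_comm]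
    exact (hasStrictDerivAt_ftan lam hcos).comp z (ih hn)

theorem continuousAt_cos_iterate (h : PoleFree lam n z) {j : ℕ} (hj : j ≤ n) :
    ContinuousAt (fun y => cos ((ftan lam)^[j] y)) z :=
  continuous_cos.continuousAt.comp (h.mono hj).hasStrictDerivAt_iterate.hasDerivAt.continuousAt

theorem eventually_nhds (h : PoleFree lam n z) : ∀ᶠ y in 𝓝 z, PoleFree lam n y := by
  have hj : ∀ j ∈ Finset.range n, ∀ᶠ y in 𝓝 z, cos ((ftan lam)^[j] y) ≠ 0 := fun j hj =>
    (h.continuousAt_cos_iterate (Finset.mem_range.1 hj).le).eventually_ne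
      (h j (Finset.mem_range.1 hj))
  filter_upwards [(eventually_all_finset _).2 hj] with y hy j hj
  exact hy j (Finset.mem_range.2 hj)

theorem continuousAt_prod (h : PoleFree lam n z) :
    ContinuousAt (fun y => ∏ j ∈ Finset.range n, lam / cos ((ftan lam)^[j] y) ^ 2) z :=
  tendsto_finsetProd _ fun j hj => continuousAt_const.div
    ((h.continuousAt_cos_iterate (Finset.mem_range.1 hj).le).pow 2)
    (pow_ne_zero 2 (h j (Finset.mem_range.1 hj)))

theorem prod_ne_zero (hlam : lam ≠ 0) (h : PoleFree lam n z) :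
    ∏ j ∈ Finset.range n, lam / cos ((ftan lam)^[j] z) ^ 2 ≠ 0 :=
  Finset.prod_ne_zero_iff.2 fun j hj =>
    div_ne_zero hlam (pow_ne_zero 2 (h j (Finset.mem_range.1 hj)))

end PoleFree

theorem poleFree_and_iterate_eq_self {m n : ℕ} {z b : ℂ} (hz : PoleFree lam (m + 1) z)
    (hb : cos b ≠ 0) (hbz : ftan lam b = z) (hn : (ftan lam)^[m + 1] z = b + n * π) :
    PoleFree lam (m + 2) z ∧ (ftan lam)^[m + 2] z = z := by
  refine ⟨poleFree_succ.2 ⟨hz, ?_⟩, ?_⟩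
  · rw [hn, cos_antiperiodic.add_nat_mul_eq]
    exact mul_ne_zero (pow_ne_zero n (neg_ne_zero.2 one_ne_zero)) hb
  · rw [Function.iterate_succ_apply', hn, ftan_add_nat_mul_pi, hbz]

theorem tendsto_norm_deriv_iterate_atTop (hlam : lam ≠ 0) {m : ℕ} {v : ℂ}
    (hpole : cos ((ftan lam)^[m] v) = 0) (hfree : PoleFree lam m v) (h1 : v ≠ I * lam)
    (h2 : v ≠ -(I * lam)) {z : ℕ → ℂ} (hzv : Tendsto z atTop (𝓝 v))
    (hz : ∀ᶠ k in atTop, PoleFree lam (m + 2) (z k) ∧ (ftan lam)^[m + 2] (z k) = z k) :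
    Tendsto (fun k => ‖deriv (ftan lam)^[m + 2] (z k)‖) atTop atTop := by
  set P := fun y => ∏ j ∈ Finset.range m, lam / cos ((ftan lam)^[j] y) ^ 2
  have hderiv : ∀ᶠ k in atTop, deriv (ftan lam)^[m + 2] (z k) =
      P (z k) * (lam / cos ((ftan lam)^[m] (z k)) ^ 2) * (lam + z k ^ 2 / lam) := by
    filter_upwards [hz] with k ⟨hfree_k, hper⟩
    rw [hfree_k.hasStrictDerivAt_iterate.hasDerivAt.deriv, Finset.prod_range_succ,
      Finset.prod_range_succ, div_cos_sq_eq_add_ftan_sq hlam (hfree_k (m + 1) (by omega)),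
      ← Function.iterate_succ_apply' (ftan lam), hper]
  have hP : Tendsto (fun k => ‖P (z k)‖) atTop (𝓝 ‖P v‖) :=
    (hfree.continuousAt_prod.tendsto.comp hzv).norm
  have hcos : Tendsto (fun k => cos ((ftan lam)^[m] (z k))) atTop (𝓝[≠] 0) :=
    tendsto_nhdsWithin_iff.2 ⟨hpole ▸ (hfree.continuousAt_cos_iterate le_rfl).tendsto.comp hzv,
      hz.mono fun k hk => hk.1 m (by omega)⟩
  have hpole_factor : Tendsto (fun k => ‖lam / cos ((ftan lam)^[m] (z k)) ^ 2‖) atTop atTop := by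
    refine (((tendsto_pow_atTop two_ne_zero).comp
      (tendsto_norm_inv_nhdsNE_zero_atTop.comp hcos)).const_mul_atTop
      (norm_pos_iff.2 hlam)).congr fun k => ?_
    simp [div_eq_mul_inv]
  have hlast : Tendsto (fun k => ‖lam + z k ^ 2 / lam‖) atTop (𝓝 ‖lam + v ^ 2 / lam‖) :=
    (tendsto_const_nhds.add ((hzv.pow 2).div_const lam)).norm
  have hlast0 : lam + v ^ 2 / lam ≠ 0 := by
    have : lam + v ^ 2 / lam = (v - I * lam) * (v + I * lam) / lam := by
      field_simp
      linear_combination lam ^ 2 * I_sq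
    rw [this]
    exact div_ne_zero (mul_ne_zero (sub_ne_zero.2 h1) (by rwa [← sub_neg_eq_add, sub_ne_zero]))
      hlam
  refine ((hP.pos_mul_atTop (norm_pos_iff.2 (hfree.prod_ne_zero hlam)) hpole_factor).atTop_mul_pos
    (norm_pos_iff.2 hlast0) hlast).congr' ?_
  filter_upwards [hderiv] with k hk
  rw [hk, norm_mul, norm_mul]

end TangentFamily

/-- Repelling periodic points of period `p` accumulate at each prepole of
order `p−1` that is not an asymptotic value, with multipliers tending to infinity. -/
theorem repelling_points_accumulate_at_prepole (lam : ℂ) (hlam : lam ≠ 0)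
    (p : ℕ) (hp : 2 ≤ p) (v : ℂ) (hv : IsPrepole lam (p - 1) v)
    (h1 : v ≠ Complex.I * lam) (h2 : v ≠ -(Complex.I * lam)) :
    ∃ z : ℕ → ℂ,
      (∀ k, PoleFree lam p (z k) ∧ (ftan lam)^[p] (z k) = z k) ∧
      Filter.Tendsto z Filter.atTop (nhds v) ∧
      Filter.Tendsto (fun k => ‖deriv ((ftan lam)^[p]) (z k)‖)
        Filter.atTop Filter.atTop := by
  obtain ⟨m, rfl⟩ : ∃ m, p = m + 2 := ⟨p - 2, by omega⟩
  obtain ⟨hpole, hfree⟩ : cos ((ftan lam)^[m] v) = 0 ∧ PoleFree lam m v := hv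
  obtain ⟨α, a, hα, hαv⟩ := exists_local_inverse_ftan hlam h1 h2
  have hG := (hasStrictDerivAt_inv_ftan hlam hpole).comp v hfree.hasStrictDerivAt_iterate
  have hc : Tendsto (fun k : ℕ => ‖(k : ℂ) * Real.pi‖) atTop atTop := by
    simpa [abs_of_pos Real.pi_pos] using
      tendsto_natCast_atTop_atTop.atTop_mul_const Real.pi_pos
  obtain ⟨z, hzv, hz⟩ := exists_seq_tendsto_mul_add_eq_one hG
    (mul_ne_zero (neg_ne_zero.2 (inv_ne_zero hlam)) (hfree.prod_ne_zero hlam))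
    (by simp [ftan, tan_eq_sin_div_cos, hpole]) hα hc
  have hper : ∀ᶠ k in atTop, PoleFree lam (m + 2) (z k) ∧ (ftan lam)^[m + 2] (z k) = z k := by
    filter_upwards [hzv.eventually hαv, hzv.eventually hfree.eventually_nhds, hz]
      with k ⟨hcos, hinv⟩ hfree_k heq
    have hne : ftan lam ((ftan lam)^[m] (z k)) ≠ 0 :=
      inv_eq_zero.not.1 (left_ne_zero_of_mul_eq_one heq)
    refine poleFree_and_iterate_eq_self (n := k)
      (poleFree_succ.2 ⟨hfree_k, cos_ne_zero_of_ftan_ne_zero hne⟩) hcos hinv ?_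
    rw [Function.iterate_succ_apply']
    exact (inv_mul_eq_one₀ hne).1 heq
  obtain ⟨K, hK⟩ := eventually_atTop.1 hper
  exact ⟨fun k => z (k + K), fun k => hK _ (Nat.le_add_left K k),
    hzv.comp (tendsto_add_atTop_nat K),
    (tendsto_norm_deriv_iterate_atTop hlam hpole hfree h1 h2 hzv hper).comp
      (tendsto_add_atTop_nat K)⟩
end

section
/- Fix λ ∈ ℂ, λ ≠ 0, and an integer p ≥ 1. If (v_n) is a sequence of prepoles of f_λ of order p with v_n ≠ v for all n and v_n → v for some v ∈ ℂ, then v is a prepole of f_λ of order k for some 1 ≤ k ≤ p−1. (In particular, for p = 1 the poles have no finite accumulation point.) -/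
open Complex Filter

lemma analyticAt_ftan (lam : ℂ) {z : ℂ} (h : Complex.cos z ≠ 0) :
    AnalyticAt ℂ (ftan lam) z := by
  have : AnalyticAt ℂ (fun w => lam * (Complex.sin w / Complex.cos w)) z :=
    (analyticAt_const.mul
      (((Complex.differentiable_sin.analyticAt z)).div
        ((Complex.differentiable_cos.analyticAt z)) h))
  refine this.congr ?_
  filter_upwards [eventually_nhds_iff.2 ⟨_, fun y hy => hy, isOpen_compl_singleton.preimage
    Complex.continuous_cos, h⟩] with y hy
  simp [ftan, Complex.tan_eq_sin_div_cos]

lemma iter_analytic (lam : ℂ) (hlam : lam ≠ 0) (q : ℕ) (z : ℂ) (h : PoleFree lam q z) :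
    AnalyticAt ℂ ((ftan lam)^[q]) z ∧
      ∃ d : ℂ, d ≠ 0 ∧ HasDerivAt ((ftan lam)^[q]) d z := by
  induction q with
  | zero =>
    exact ⟨analyticAt_id, 1, one_ne_zero, by simpa using hasDerivAt_id z⟩
  | succ n ih =>
    have hfree : PoleFree lam n z := fun j hj => h j (Nat.lt_succ_of_lt hj)
    obtain ⟨hA, d, hd0, hD⟩ := ih hfree
    have hc : Complex.cos ((ftan lam)^[n] z) ≠ 0 := h n (Nat.lt_succ_self n)
    have hft : HasDerivAt (ftan lam) (lam * (1 / Complex.cos ((ftan lam)^[n] z) ^ 2))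
        ((ftan lam)^[n] z) := (Complex.hasDerivAt_tan hc).const_mul lam
    constructor
    · rw [Function.iterate_succ']
      exact (analyticAt_ftan lam hc).comp hA
    · refine ⟨lam * (1 / Complex.cos ((ftan lam)^[n] z) ^ 2) * d,
        mul_ne_zero (mul_ne_zero hlam (by simp [pow_ne_zero, hc])) hd0, ?_⟩
      rw [Function.iterate_succ']
      exact hft.comp z hD

/-- Finite accumulation points of prepoles of order `p` are prepoles of some
order `k` with `1 ≤ k ≤ p−1`. -/
theorem prepole_accumulation (lam : ℂ) (hlam : lam ≠ 0) (p : ℕ) (hp : 1 ≤ p)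
    (v : ℕ → ℂ) (w : ℂ) (hpre : ∀ n, IsPrepole lam p (v n))
    (hne : ∀ n, v n ≠ w) (hlim : Filter.Tendsto v Filter.atTop (nhds w)) :
    ∃ k, 1 ≤ k ∧ k ≤ p - 1 ∧ IsPrepole lam k w := by
  by_cases hex : ∃ j, j < p - 1 ∧ Complex.cos ((ftan lam)^[j] w) = 0
  · classical
    let j0 := Nat.find hex
    obtain ⟨hj0lt, hj0⟩ := Nat.find_spec hex
    refine ⟨j0 + 1, Nat.le_add_left 1 j0, by omega, ?_, ?_⟩
    · simpa using hj0
    · intro j hj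
      simp only [Nat.add_sub_cancel] at hj
      intro hc
      exact Nat.find_min hex hj ⟨lt_trans hj hj0lt, hc⟩
  · -- pole-free orbit up to p-1 at w
    exfalso
    have hfree : PoleFree lam (p - 1) w := by
      intro j hj
      by_contra hc
      exact hex ⟨j, hj, hc⟩
    obtain ⟨hA, d, hd0, hD⟩ := iter_analytic lam hlam (p - 1) w hfree
    set F : ℂ → ℂ := (ftan lam)^[p - 1] with hF
    have hgA : AnalyticAt ℂ (fun z => Complex.cos (F z)) w :=
      (Complex.differentiable_cos.analyticAt (F w)).comp hA
    have hvz : ∀ n, Complex.cos (F (v n)) = 0 := fun n => (hpre n).1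
    have htend : Tendsto v atTop (nhdsWithin w {w}ᶜ) :=
      tendsto_nhdsWithin_iff.2 ⟨hlim, Eventually.of_forall fun n => hne n⟩
    rcases hgA.eventually_eq_zero_or_eventually_ne_zero with h0 | h1
    · -- cos ∘ F vanishes near w: contradiction via nonzero derivative
      have hcw : Complex.cos (F w) = 0 := h0.self_of_nhds
      have hsw : Complex.sin (F w) ≠ 0 := by
        intro hs
        have := Complex.sin_sq_add_cos_sq (F w)
        rw [hs, hcw] at this; simp at this
      have hD1 : HasDerivAt (fun z => Complex.cos (F z)) (-Complex.sin (F w) * d) w :=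
        (Complex.hasDerivAt_cos (F w)).comp w hD
      have hD2 : HasDerivAt (fun z => Complex.cos (F z)) 0 w :=
        (hasDerivAt_const w (0 : ℂ)).congr_of_eventuallyEq h0
      have : -Complex.sin (F w) * d = 0 := hD1.unique hD2
      exact mul_ne_zero (neg_ne_zero.2 hsw) hd0 this
    · obtain ⟨n, hn⟩ := (htend.eventually h1).exists
      exact hn (hvz n)
end

section
/- Fix λ ∈ ℂ with λ ≠ 0 and Re λ > 0, an integer p ≥ 2, and integers n_2, …, n_p. For n ∈ ℤ define the inverse branch g_n(z) = nπ + (1/(2i))·Log((λ + iz)/(λ − iz)), with Log the principal complex logarithm. Set w_2 = (n_2 + 1/2)π and w_{j+1} = g_{n_{j+1}}(w_j) for 2 ≤ j ≤ p−1, and assume that for each 2 ≤ j ≤ p−1 one has λ − i·w_j ≠ 0 and (λ + i·w_j)/(λ − i·w_j) is not a nonpositive real number. Then the sequence of prepoles with itinerary (m, n_2, …, n_p), namely v_m = (g_{n_p} ∘ ⋯ ∘ g_{n_2})((m + 1/2)π), converges to w_p as m → +∞ (m ∈ ℕ). -/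
open Complex Filter Topology

/-- The inverse branch `g_n(z) = nπ + (1/(2i))·Log((λ + iz)/(λ − iz))` of `f_λ`
with real part near `nπ`. -/
noncomputable def tanBranch (lam : ℂ) (n : ℤ) (z : ℂ) : ℂ :=
  (n : ℂ) * Real.pi +
    (1 / (2 * Complex.I)) * Complex.log ((lam + Complex.I * z) / (lam - Complex.I * z))

/-- `branchComp lam n base k` is the composition
`g_{n (base+k)} ∘ ⋯ ∘ g_{n (base+1)}` of `k` inverse branches. -/
noncomputable def branchComp (lam : ℂ) (n : ℕ → ℤ) (base : ℕ) : ℕ → ℂ → ℂ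
  | 0, z => z
  | k + 1, z => tanBranch lam (n (base + k + 1)) (branchComp lam n base k z)

/-!
As `t → +∞` along the reals, `(λ + it)/(λ − it) → -1`, and for `Re λ ≥ 0` it does so from the
closed upper half-plane, where `Log` is continuous at `-1` with value `πi`. Hence
`g_ν(t) → νπ + π/2`, so the innermost branch sends the poles `(m + 1/2)π` to the pole
`w₂ = (n₂ + 1/2)π`. The remaining branches are continuous along the orbit `w₂, …, w_{p-1}`
because their Möbius arguments stay in the slit plane.
-/

lemma mem_slitPlane_of_forall_ne_ofReal {z : ℂ} (h : ∀ x : ℝ, x ≤ 0 → z ≠ x) :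
    z ∈ slitPlane := by
  rw [mem_slitPlane_iff_not_le_zero]
  intro hz
  rw [nonpos_iff] at hz
  exact h z.re hz.1 (Complex.ext rfl (by simpa using hz.2))

lemma tendsto_div_sub_I_mul_atTop (lam : ℂ) :
    Tendsto (fun t : ℝ => (lam + I * t) / (lam - I * t)) atTop (𝓝 (-1)) := by
  have hsmall : Tendsto (fun t : ℝ => lam * ((t⁻¹ : ℝ) : ℂ)) atTop (𝓝 0) := by
    simpa using ((continuous_ofReal.tendsto 0).comp tendsto_inv_atTop_zero).const_mul lam
  have hlim := (hsmall.add_const I).div (hsmall.sub_const I) (by simp)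
  rw [zero_add, zero_sub, div_neg, div_self I_ne_zero] at hlim
  refine hlim.congr' ?_
  filter_upwards [eventually_gt_atTop 0] with t ht
  have ht' : (t : ℂ) ≠ 0 := ofReal_ne_zero.2 ht.ne'
  simp only [Pi.div_apply, ofReal_inv]
  rw [← mul_div_mul_right _ _ ht']
  field_simp

lemma im_div_sub_I_mul_nonneg {lam : ℂ} (hre : 0 ≤ lam.re) {t : ℝ} (ht : 0 ≤ t) :
    0 ≤ ((lam + I * t) / (lam - I * t)).im := by
  have him : ((lam + I * t) / (lam - I * t)).im = 2 * lam.re * t / normSq (lam - I * t) := by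
    simp only [div_im, add_im, add_re, sub_im, sub_re, mul_im, mul_re, I_re, I_im, ofReal_re,
      ofReal_im]
    ring
  rw [him]
  exact div_nonneg (by positivity) (normSq_nonneg _)

lemma tendsto_tanBranch_atTop {lam : ℂ} (hre : 0 ≤ lam.re) (ν : ℤ) :
    Tendsto (fun t : ℝ => tanBranch lam ν t) atTop (𝓝 ((ν + 1 / 2) * Real.pi)) := by
  have hratio : Tendsto (fun t : ℝ => (lam + I * t) / (lam - I * t)) atTop
      (𝓝[{z : ℂ | 0 ≤ z.im}] (-1)) :=
    tendsto_nhdsWithin_iff.2 ⟨tendsto_div_sub_I_mul_atTop lam,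
      (eventually_ge_atTop 0).mono fun t ht => im_div_sub_I_mul_nonneg hre ht⟩
  have hlog := (tendsto_log_nhdsWithin_im_nonneg_of_re_neg_of_im_zero
    (z := -1) (by simp) (by simp)).comp hratio
  simp only [norm_neg, norm_one, Real.log_one, ofReal_zero, zero_add] at hlog
  convert (hlog.const_mul (1 / (2 * I))).const_add ((ν : ℂ) * Real.pi) using 2
  · rfl
  · field_simp

lemma continuousAt_tanBranch {lam w : ℂ} (ν : ℤ)
    (hw : (lam + I * w) / (lam - I * w) ∈ slitPlane) : ContinuousAt (tanBranch lam ν) w := by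
  have hden : lam - I * w ≠ 0 := fun h => slitPlane_ne_zero hw (by rw [h, div_zero])
  have hratio : ContinuousAt (fun z => (lam + I * z) / (lam - I * z)) w := by
    fun_prop (disch := exact hden)
  exact continuousAt_const.add <| continuousAt_const.mul <| hratio.clog hw

lemma continuousAt_branchComp {lam w : ℂ} {n : ℕ → ℤ} {base k : ℕ}
    (horbit : ∀ j < k, (lam + I * branchComp lam n base j w) /
      (lam - I * branchComp lam n base j w) ∈ slitPlane) :
    ContinuousAt (branchComp lam n base k) w := by
  induction k with
  | zero => exact continuousAt_id
  | succ k ih =>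
    exact (continuousAt_tanBranch _ (horbit k k.lt_succ_self)).comp
      (ih fun j hj => horbit j (hj.trans k.lt_succ_self))

lemma branchComp_succ_eq_branchComp_tanBranch (lam : ℂ) (n : ℕ → ℤ) (base k : ℕ) (z : ℂ) :
    branchComp lam n base (k + 1) z =
      branchComp lam n (base + 1) k (tanBranch lam (n (base + 1)) z) := by
  induction k with
  | zero => rfl
  | succ k ih =>
    rw [branchComp, ih, branchComp]
    congr 2
    omega

lemma tendsto_pole_atTop :
    Tendsto (fun m : ℕ => ((m : ℝ) + 1 / 2) * Real.pi) atTop atTop :=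
  (tendsto_atTop_add_const_right _ _ tendsto_natCast_atTop_atTop).atTop_mul_const Real.pi_pos

theorem prepoles_accumulate_along_itinerary_general (lam : ℂ)
    (hre : 0 < lam.re) (p : ℕ) (hp : 2 ≤ p) (n : ℕ → ℤ)
    (hreg : ∀ j, 2 ≤ j → j ≤ p - 1 →
      (lam - Complex.I * branchComp lam n 2 (j - 2)
          (((n 2 : ℂ) + 1 / 2) * Real.pi) ≠ 0) ∧
      (∀ x : ℝ, x ≤ 0 →
        (lam + Complex.I * branchComp lam n 2 (j - 2) (((n 2 : ℂ) + 1 / 2) * Real.pi)) /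
          (lam - Complex.I * branchComp lam n 2 (j - 2) (((n 2 : ℂ) + 1 / 2) * Real.pi))
            ≠ (x : ℂ))) :
    Filter.Tendsto
      (fun m : ℕ => branchComp lam n 1 (p - 1) (((m : ℂ) + 1 / 2) * Real.pi))
      Filter.atTop
      (nhds (branchComp lam n 2 (p - 2) (((n 2 : ℂ) + 1 / 2) * Real.pi))) := by
  obtain ⟨q, rfl⟩ : ∃ q, p = q + 2 := ⟨p - 2, by omega⟩
  rw [show q + 2 - 1 = q + 1 by omega, Nat.add_sub_cancel]
  have hcont : ContinuousAt (branchComp lam n 2 q) (((n 2 : ℂ) + 1 / 2) * Real.pi) :=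
    continuousAt_branchComp fun j hj => by
      simpa using mem_slitPlane_of_forall_ne_ofReal (hreg (j + 2) (by omega) (by omega)).2
  have hfirst := (tendsto_tanBranch_atTop hre.le (n 2)).comp tendsto_pole_atTop
  refine (hcont.tendsto.comp hfirst).congr fun m => ?_
  simp [branchComp_succ_eq_branchComp_tanBranch]

/-- Fix `λ` with `λ ≠ 0`, `Re λ > 0`, `p ≥ 2`, and integers `n₂, …, n_p`. With
`w₂ = (n₂ + 1/2)π` and `w_{j+1} = g_{n_{j+1}}(w_j)` (so `w_j = branchComp lam n 2 (j-2) w₂`),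
assume for `2 ≤ j ≤ p−1` that `λ − i·w_j ≠ 0` and `(λ + i·w_j)/(λ − i·w_j)` is not a
nonpositive real. Then the prepoles with itinerary `(m, n₂, …, n_p)`, namely
`v_m = (g_{n_p} ∘ ⋯ ∘ g_{n_2})((m + 1/2)π)`, converge to `w_p` as `m → +∞`. -/
theorem prepoles_accumulate_along_itinerary (lam : ℂ) (hlam : lam ≠ 0)
    (hre : 0 < lam.re) (p : ℕ) (hp : 2 ≤ p) (n : ℕ → ℤ)
    (hreg : ∀ j, 2 ≤ j → j ≤ p - 1 →
      (lam - Complex.I * branchComp lam n 2 (j - 2)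
          (((n 2 : ℂ) + 1 / 2) * Real.pi) ≠ 0) ∧
      (∀ x : ℝ, x ≤ 0 →
        (lam + Complex.I * branchComp lam n 2 (j - 2) (((n 2 : ℂ) + 1 / 2) * Real.pi)) /
          (lam - Complex.I * branchComp lam n 2 (j - 2) (((n 2 : ℂ) + 1 / 2) * Real.pi))
            ≠ (x : ℂ))) :
    Filter.Tendsto
      (fun m : ℕ => branchComp lam n 1 (p - 1) (((m : ℂ) + 1 / 2) * Real.pi))
      Filter.atTop
      (nhds (branchComp lam n 2 (p - 2) (((n 2 : ℂ) + 1 / 2) * Real.pi))) :=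
  prepoles_accumulate_along_itinerary_general lam hre p hp n hreg
end

section
/- Let p ≥ 2 and let λ₀ ∈ 𝒞_{p−1}, i.e. λ₀ ≠ 0 and iλ₀ is a prepole of f_{λ₀} of order p−1. Then for every ε > 0 there exists λ with 0 < |λ − λ₀| < ε and λ ∈ 𝒞_p, i.e. iλ is a prepole of f_λ of order p. (Virtual centers of order p accumulate at each virtual center of order p−1.) -/
open Complex Filter

open Topology

/-!
Write `g_n(λ) = f_λ^[n](iλ)`. Off the parameters at which an earlier iterate hits a pole, `g_n` is
analytic in `λ`; that exceptional set is countable, so its complement is connected, and since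
`g_n(0) = 0` the function `cos ∘ g_n` has only isolated zeros there. At `λ₀`, the function
`1 / g_{n+1} = cos g_n / (λ sin g_n)` (with `n = p - 2`) is analytic, vanishes at `λ₀` and nowhere
else nearby, so by the open mapping theorem it takes every small value near `λ₀`. Taking the values
`((k + 1/2) π)⁻¹` for large `k` makes `g_{n+1}(λ)` a pole.
-/

section IsolatedZeros

variable {𝕜 E : Type*} [NontriviallyNormedField 𝕜] [NormedAddCommGroup E] [NormedSpace 𝕜 E]
  {f : 𝕜 → E} {U : Set 𝕜} {z₀ : 𝕜}

theorem AnalyticOnNhd.eventually_nhdsNE_ne_zero (hf : AnalyticOnNhd 𝕜 f U)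
    (hU : IsPreconnected U) (hz₀ : z₀ ∈ U) (hfz₀ : f z₀ ≠ 0) {x : 𝕜} (hx : x ∈ U) :
    ∀ᶠ z in 𝓝[≠] x, f z ≠ 0 :=
  (hf x hx).eventually_eq_zero_or_eventually_ne_zero.resolve_left fun h =>
    hfz₀ <| hf.eqOn_zero_of_preconnected_of_frequently_eq_zero hU hx
      (h.filter_mono nhdsWithin_le_nhds).frequently hz₀

theorem AnalyticOnNhd.countable_zeros [SecondCountableTopology 𝕜] (hf : AnalyticOnNhd 𝕜 f U)
    (hU : IsPreconnected U) (hz₀ : z₀ ∈ U) (hfz₀ : f z₀ ≠ 0) :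
    (f ⁻¹' {0} ∩ U).Countable := by
  rcases hf.eqOn_zero_or_eventually_ne_zero_of_preconnected hU with h | h
  · exact absurd (h hz₀) hfz₀
  · exact (HereditarilyLindelofSpace.isLindelof _).countable_of_isDiscrete
      (isDiscrete_of_codiscreteWithin h)

end IsolatedZeros

theorem AnalyticAt.eventually_nhdsNE_exists_eq {f : ℂ → ℂ} {x : ℂ} {P : ℂ → Prop}
    (hf : AnalyticAt ℂ f x) (hne : ∀ᶠ z in 𝓝[≠] x, f z ≠ f x) (hP : ∀ᶠ z in 𝓝[≠] x, P z) :
    ∀ᶠ w in 𝓝[≠] (f x), ∃ z, P z ∧ f z = w := by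
  have hmap : 𝓝 (f x) ≤ map f (𝓝 x) :=
    hf.eventually_constant_or_nhds_le_map_nhds.resolve_left fun h =>
      (hne.and (h.filter_mono nhdsWithin_le_nhds)).exists.elim fun _ hz => hz.1 hz.2
  rw [eventually_nhdsWithin_iff] at hP
  filter_upwards [nhdsWithin_le_nhds (hmap (image_mem_map hP)), self_mem_nhdsWithin]
    with w ⟨z, hz, hzw⟩ hw
  exact ⟨z, hz fun h => hw (hzw ▸ congrArg f h), hzw⟩

theorem isPreconnected_of_countable_compl {E : Type*} [NormedAddCommGroup E] [NormedSpace ℝ E]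
    (hE : 1 < Module.rank ℝ E) {s : Set E} (hs : sᶜ.Countable) : IsPreconnected s :=
  compl_compl s ▸ (hs.isConnected_compl_of_one_lt_rank hE).isPreconnected

theorem Complex.sin_ne_zero_of_cos_eq_zero {z : ℂ} (h : cos z = 0) : sin z ≠ 0 := fun hs => by
  simpa [hs, h] using sin_sq_add_cos_sq z

theorem Complex.frequently_cos_inv_eq_zero : ∃ᶠ w in 𝓝[≠] (0 : ℂ), cos w⁻¹ = 0 := by
  set u : ℕ → ℝ := fun k => (2 * k + 1) * Real.pi / 2
  have hu : Tendsto u atTop atTop :=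
    tendsto_atTop_mono (fun k => by
      simp only [u]; nlinarith [Real.pi_gt_three, (k.cast_nonneg : (0 : ℝ) ≤ k)])
      tendsto_natCast_atTop_atTop
  have hu_pos : ∀ k, 0 < u k := fun k => by positivity
  have hlim : Tendsto (fun k => ((u k)⁻¹ : ℂ)) atTop (𝓝[≠] 0) := by
    refine tendsto_nhdsWithin_iff.2 ⟨?_, .of_forall fun k => by simp [(hu_pos k).ne']⟩
    simpa [Function.comp_def] using
      (continuous_ofReal.tendsto 0).comp (tendsto_inv_atTop_zero.comp hu)
  refine hlim.frequently (.of_forall fun k => ?_)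
  rw [inv_inv, cos_eq_zero_iff]
  exact ⟨k, by simp [u]⟩

noncomputable def asymptoticOrbit (j : ℕ) (lam : ℂ) : ℂ := (ftan lam)^[j] (I * lam)

def poleFreeParams (j : ℕ) : Set ℂ := {lam | PoleFree lam j (I * lam)}

theorem asymptoticOrbit_succ (j : ℕ) (lam : ℂ) :
    asymptoticOrbit (j + 1) lam =
      lam * sin (asymptoticOrbit j lam) / cos (asymptoticOrbit j lam) := by
  simp [asymptoticOrbit, Function.iterate_succ_apply', ftan, tan_eq_sin_div_cos, mul_div_assoc]

theorem asymptoticOrbit_apply_zero (j : ℕ) : asymptoticOrbit j 0 = 0 := by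
  induction j with
  | zero => simp [asymptoticOrbit]
  | succ j ih => simp [asymptoticOrbit_succ, ih]

theorem poleFree_succ_iff {lam z : ℂ} {j : ℕ} :
    PoleFree lam (j + 1) z ↔ PoleFree lam j z ∧ cos ((ftan lam)^[j] z) ≠ 0 :=
  Nat.forall_lt_succ_right

theorem isPrepole_succ_iff {lam z : ℂ} {j : ℕ} :
    IsPrepole lam (j + 1) z ↔ cos ((ftan lam)^[j] z) = 0 ∧ PoleFree lam j z :=
  Iff.rfl

theorem zero_mem_poleFreeParams (j : ℕ) : 0 ∈ poleFreeParams j := fun i _ =>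
  show cos (asymptoticOrbit i 0) ≠ 0 by simp [asymptoticOrbit_apply_zero]

theorem analyticOnNhd_asymptoticOrbit (j : ℕ) :
    AnalyticOnNhd ℂ (asymptoticOrbit j) (poleFreeParams j) := by
  induction j with
  | zero => exact fun _ _ => show AnalyticAt ℂ (fun lam => I * lam) _ by fun_prop
  | succ j ih =>
    intro lam hlam
    obtain ⟨hlam, hcos⟩ := poleFree_succ_iff.1 hlam
    have hg := ih lam hlam
    rw [funext (asymptoticOrbit_succ j)]
    exact (analyticAt_id.mul (analyticAt_sin.comp hg)).div (analyticAt_cos.comp hg) hcos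

theorem analyticOnNhd_cos_asymptoticOrbit (j : ℕ) :
    AnalyticOnNhd ℂ (fun lam => cos (asymptoticOrbit j lam)) (poleFreeParams j) :=
  fun lam hlam => analyticAt_cos.comp (analyticOnNhd_asymptoticOrbit j lam hlam)

theorem countable_compl_poleFreeParams (j : ℕ) : (poleFreeParams j)ᶜ.Countable := by
  induction j with
  | zero => simp [poleFreeParams, PoleFree]
  | succ j ih =>
    have hzeros := (analyticOnNhd_cos_asymptoticOrbit j).countable_zeros
      (isPreconnected_of_countable_compl (by simp) ih) (zero_mem_poleFreeParams j)
      (by simp [asymptoticOrbit_apply_zero])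
    refine (ih.union hzeros).mono fun lam hlam => ?_
    by_cases hj : lam ∈ poleFreeParams j
    · exact .inr ⟨not_not.1 fun hcos => hlam (poleFree_succ_iff.2 ⟨hj, hcos⟩), hj⟩
    · exact .inl hj

theorem eventually_nhdsNE_cos_asymptoticOrbit_ne_zero {j : ℕ} {lam0 : ℂ}
    (hlam0 : lam0 ∈ poleFreeParams j) :
    ∀ᶠ lam in 𝓝[≠] lam0, cos (asymptoticOrbit j lam) ≠ 0 :=
  (analyticOnNhd_cos_asymptoticOrbit j).eventually_nhdsNE_ne_zero
    (isPreconnected_of_countable_compl (by simp) (countable_compl_poleFreeParams j))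
    (zero_mem_poleFreeParams j) (by simp [asymptoticOrbit_apply_zero]) hlam0

theorem eventually_nhds_mem_poleFreeParams {j : ℕ} {lam0 : ℂ}
    (hlam0 : lam0 ∈ poleFreeParams j) : ∀ᶠ lam in 𝓝 lam0, lam ∈ poleFreeParams j := by
  induction j with
  | zero => exact .of_forall fun _ _ h => absurd h (Nat.not_lt_zero _)
  | succ j ih =>
    obtain ⟨hlam0, hcos⟩ := poleFree_succ_iff.1 hlam0
    filter_upwards [ih hlam0,
      (analyticOnNhd_cos_asymptoticOrbit j lam0 hlam0).continuousAt.eventually_ne hcos]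
      with lam hlam hcos
    exact poleFree_succ_iff.2 ⟨hlam, hcos⟩

theorem analyticAt_inv_asymptoticOrbit_succ {n : ℕ} {lam0 : ℂ} (h0 : lam0 ≠ 0)
    (hfree : lam0 ∈ poleFreeParams n) (hpole : cos (asymptoticOrbit n lam0) = 0) :
    AnalyticAt ℂ (fun lam => (asymptoticOrbit (n + 1) lam)⁻¹) lam0 := by
  have hg := analyticOnNhd_asymptoticOrbit n lam0 hfree
  simp_rw [asymptoticOrbit_succ, inv_div]
  exact (analyticAt_cos.comp hg).div (analyticAt_id.mul (analyticAt_sin.comp hg))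
    (mul_ne_zero h0 (sin_ne_zero_of_cos_eq_zero hpole))

theorem eventually_nhdsNE_mem_poleFreeParams_succ {n : ℕ} {lam0 : ℂ} (h0 : lam0 ≠ 0)
    (hfree : lam0 ∈ poleFreeParams n) (hpole : cos (asymptoticOrbit n lam0) = 0) :
    ∀ᶠ lam in 𝓝[≠] lam0,
      lam ≠ 0 ∧ lam ∈ poleFreeParams (n + 1) ∧ asymptoticOrbit (n + 1) lam ≠ 0 := by
  have hsin := (analyticAt_sin.comp (analyticOnNhd_asymptoticOrbit n lam0 hfree)).continuousAt
    |>.eventually_ne (sin_ne_zero_of_cos_eq_zero hpole)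
  filter_upwards [eventually_nhdsNE_cos_asymptoticOrbit_ne_zero hfree,
    nhdsWithin_le_nhds (eventually_nhds_mem_poleFreeParams hfree),
    nhdsWithin_le_nhds (eventually_ne_nhds h0), nhdsWithin_le_nhds hsin]
    with lam hcos hlam hne hsin
  rw [asymptoticOrbit_succ]
  exact ⟨hne, poleFree_succ_iff.2 ⟨hlam, hcos⟩, div_ne_zero (mul_ne_zero hne hsin) hcos⟩

/-- Virtual centers of order `p` accumulate at each virtual center of order
`p−1`: if `iλ₀` is a prepole of `f_{λ₀}` of order `p−1`, then arbitrarily close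
to `λ₀` there is `λ ≠ λ₀` with `iλ` a prepole of `f_λ` of order `p`. -/
theorem virtual_centers_accumulate (p : ℕ) (hp : 2 ≤ p) (lam0 : ℂ) (h0 : lam0 ≠ 0)
    (hpre : IsPrepole lam0 (p - 1) (Complex.I * lam0)) :
    ∀ ε > (0 : ℝ), ∃ lam : ℂ, lam ≠ 0 ∧
      0 < ‖lam - lam0‖ ∧ ‖lam - lam0‖ < ε ∧
      IsPrepole lam p (Complex.I * lam) := by
  intro ε hε
  obtain ⟨n, rfl⟩ : ∃ n, p = n + 2 := ⟨p - 2, by omega⟩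
  obtain ⟨hpole, hfree⟩ : cos (asymptoticOrbit n lam0) = 0 ∧ lam0 ∈ poleFreeParams n := hpre
  have hinv0 : (asymptoticOrbit (n + 1) lam0)⁻¹ = 0 := by simp [asymptoticOrbit_succ, hpole]
  have hnear := eventually_nhdsNE_mem_poleFreeParams_succ h0 hfree hpole
  have hsmall : ∀ᶠ lam in 𝓝[≠] lam0, lam ≠ lam0 ∧ lam ∈ Metric.ball lam0 ε :=
    Eventually.and self_mem_nhdsWithin (nhdsWithin_le_nhds (Metric.ball_mem_nhds lam0 hε))
  have hhit := (analyticAt_inv_asymptoticOrbit_succ h0 hfree hpole).eventually_nhdsNE_exists_eq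
    (by simpa [hinv0] using hnear.mono fun _ h => h.2.2) (hsmall.and hnear)
  rw [hinv0] at hhit
  obtain ⟨w, hw, lam, ⟨⟨hne, hlt⟩, hlam, hfree', -⟩, rfl⟩ :=
    (frequently_cos_inv_eq_zero.and_eventually hhit).exists
  exact ⟨lam, hlam, norm_pos_iff.2 (sub_ne_zero.2 hne), mem_ball_iff_norm.1 hlt,
    isPrepole_succ_iff.2 ⟨by rwa [inv_inv] at hw, hfree'⟩⟩
end

section
/- Let λ ∈ ℂ, λ ≠ 0. If there exist natural numbers m ≠ n with f_λ^[n](−iλ) = f_λ^[m](iλ), then the forward orbit of each asymptotic value is preperiodic: there exist k ≥ 0 and q ≥ 1 with f_λ^[k+q](iλ) = f_λ^[k](iλ), and likewise there exist k′ ≥ 0 and q′ ≥ 1 with f_λ^[k′+q′](−iλ) = f_λ^[k′](−iλ). -/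
open Complex Filter

lemma ftan_iter_neg (lam : ℂ) (k : ℕ) (z : ℂ) :
    (ftan lam)^[k] (-z) = -((ftan lam)^[k] z) := by
  induction k generalizing z with
  | zero => simp
  | succ k ih =>
    rw [Function.iterate_succ_apply, Function.iterate_succ_apply]
    rw [show ftan lam (-z) = -(ftan lam z) by simp [ftan, Complex.tan_neg], ih]

/-- If the forward orbits of the two asymptotic values `±iλ` meet, i.e.
`f_λ^[n](−iλ) = f_λ^[m](iλ)` for some `m ≠ n`, then the forward orbit of each
asymptotic value is preperiodic. -/
theorem orbit_relation_implies_preperiodic (lam : ℂ) (hlam : lam ≠ 0)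
    (m n : ℕ) (hmn : m ≠ n)
    (h : (ftan lam)^[n] (-(Complex.I * lam)) = (ftan lam)^[m] (Complex.I * lam)) :
    (∃ k q : ℕ, 1 ≤ q ∧
      (ftan lam)^[k + q] (Complex.I * lam) = (ftan lam)^[k] (Complex.I * lam)) ∧
    (∃ k q : ℕ, 1 ≤ q ∧
      (ftan lam)^[k + q] (-(Complex.I * lam)) = (ftan lam)^[k] (-(Complex.I * lam))) := by
  set a : ℕ → ℂ := fun j => (ftan lam)^[j] (Complex.I * lam) with ha
  have hneg : ∀ j, (ftan lam)^[j] (-(Complex.I * lam)) = -(a j) := fun j =>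
    ftan_iter_neg lam j _
  have h1 : -(a n) = a m := by rw [← hneg]; exact h
  -- a_{2n} = a_{2m}
  have key : a (2 * n) = a (2 * m) := by
    have h2 : (ftan lam)^[n] (-(a n)) = a (n + m) := by
      rw [h1, ha]; simp [← Function.iterate_add_apply]
    have h3 : (ftan lam)^[m] (-(a n)) = a (2 * m) := by
      rw [h1, ha]; simp [← Function.iterate_add_apply, two_mul]
    have h4 : (ftan lam)^[n] (-(a n)) = -(a (2 * n)) := by
      rw [ftan_iter_neg, ha]; simp [← Function.iterate_add_apply, two_mul]
    have h5 : (ftan lam)^[m] (-(a n)) = -(a (n + m)) := by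
      rw [ftan_iter_neg, ha]; simp [← Function.iterate_add_apply, add_comm m n]
    have : -(a (2 * n)) = a (n + m) := h4 ▸ h2
    have : a (2 * m) = a (2 * n) := by
      rw [← h3, h5, ← this, neg_neg]
    exact this.symm
  rcases Nat.lt_or_ge m n with hlt | hge
  · have hq : 2 * m + (2 * n - 2 * m) = 2 * n := by omega
    refine ⟨⟨2 * m, 2 * n - 2 * m, by omega, by rw [hq]; exact key⟩,
      ⟨2 * m, 2 * n - 2 * m, by omega, ?_⟩⟩
    rw [hneg, hneg, hq, key]
  · have hq : 2 * n + (2 * m - 2 * n) = 2 * m := by omega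
    refine ⟨⟨2 * n, 2 * m - 2 * n, by omega, by rw [hq]; exact key.symm⟩,
      ⟨2 * n, 2 * m - 2 * n, by omega, ?_⟩⟩
    rw [hneg, hneg, hq, key]
end

section
/- Let λ ∈ ℂ, λ ≠ 0, let p ≥ 3 be odd, and let z ∈ ℂ be a periodic point of f_λ of exact period p (f_λ^[p](z) = z and f_λ^[j](z) ≠ z for 1 ≤ j < p) whose orbit is pole-free up to time p. Then the symmetric cycle is disjoint from the cycle of z: f_λ^[j](z) ≠ −z for all 0 ≤ j < p. (A periodic cycle of odd period greater than 1 is never symmetric about the origin; the cycles of z and −z are distinct.) -/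
open Complex Filter

/-- A periodic cycle of odd exact period `p ≥ 3` (pole-free up to time `p`) is
disjoint from its symmetric cycle: `f_λ^[j] z ≠ −z` for all `0 ≤ j < p`. -/
theorem odd_period_cycle_not_symmetric (lam : ℂ) (hlam : lam ≠ 0)
    (p : ℕ) (hp : 3 ≤ p) (hodd : Odd p) (z : ℂ)
    (hper : (ftan lam)^[p] z = z)
    (hexact : ∀ j, 1 ≤ j → j < p → (ftan lam)^[j] z ≠ z)
    (hpf : PoleFree lam p z) :
    ∀ j < p, (ftan lam)^[j] z ≠ -z := by
  have hodd_f : ∀ w, ftan lam (-w) = -(ftan lam w) := by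
    intro w; simp [ftan, Complex.tan_eq_sin_div_cos, Complex.sin_neg, Complex.cos_neg,
      neg_div, mul_neg]
  have hiter : ∀ (k : ℕ) (w : ℂ), (ftan lam)^[k] (-w) = -((ftan lam)^[k] w) := by
    intro k
    induction k with
    | zero => simp
    | succ n ih =>
      intro w
      rw [Function.iterate_succ_apply', Function.iterate_succ_apply', ih, hodd_f]
  have hmin : Function.minimalPeriod (ftan lam) z = p := by
    have hpp : Function.IsPeriodicPt (ftan lam) p z := hper
    have hdvd := Function.IsPeriodicPt.minimalPeriod_dvd hpp
    have hpos : 0 < Function.minimalPeriod (ftan lam) z :=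
      hpp.minimalPeriod_pos (by omega)
    rcases (Nat.le_of_dvd (by omega) hdvd).lt_or_eq with h | h
    · exact absurd (Function.iterate_minimalPeriod (f := ftan lam) (x := z))
        (hexact _ hpos h)
    · exact h
  intro j hj habs
  have hj0 : j ≠ 0 := by
    rintro rfl
    simp only [Function.iterate_zero_apply] at habs
    have hz : z = 0 := by
      have : (2 : ℂ) * z = 0 := by linear_combination habs
      simpa [two_ne_zero] using this
    exact hexact 1 le_rfl (by omega) (by simp [hz, ftan])
  have h2j : Function.IsPeriodicPt (ftan lam) (2 * j) z := by
    show (ftan lam)^[2 * j] z = z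
    rw [two_mul, Function.iterate_add_apply, habs, hiter, habs, neg_neg]
  have hdvd : p ∣ 2 * j := by
    rw [← hmin]; exact Function.IsPeriodicPt.minimalPeriod_dvd h2j
  obtain ⟨c, hc⟩ := hdvd
  obtain ⟨m, hm⟩ := hodd
  have hc2 : c < 2 := by nlinarith
  interval_cases c <;> omega
end
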